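/- Alive-since comparison: let a and b be output stream identifiers of an RTLola specification and suppose that for every evaluation model w, every instance inst, and every timestamp t: (i) isSpawned(w, a, inst, t) implies isSpawned(w, b, inst, t), and (ii) for every start time t_s, isClosed(w, b, inst, t, t_s) implies isClosed(w, a, inst, t, t_s). Then for every evaluation model w, instance inst, and timestamp t: if alive(w, a, inst, t) = t_a with t_a ≠ ⊥, then alive(w, b, inst, t) = t_b with t_b ≠ ⊥ and t_b ≤ t_a. -/

import Mathlib

namespace RTLola

/-- Stream values `𝕍`. -/
inductive Val : Type where
  | nat   : ℕ → Val
  | bool  : Bool → Val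
  | str   : String → Val
  | tuple : List Val → Val

/-- Stream identifiers. -/
abbrev Ident := ℕ

/-- An instance identifier: the tuple of parameter values of a stream instance. -/
abbrev Inst := List Val

/-- Activation conditions over input stream identifiers. -/
inductive AC : Type where
  | var : Ident → AC
  | and : AC → AC → AC
  | or  : AC → AC → AC

/-- Satisfaction of an activation condition under a valuation of the identifiers. -/
def AC.sat (v : Ident → Prop) : AC → Prop
  | .var i   => v i
  | .and l r => l.sat v ∧ r.sat v
  | .or l r  => l.sat v ∨ r.sat v

/-- Pacing type annotations. -/
inductive Pacing : Type where
  | any    : Pacing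
  | event  : AC → Pacing
  | global : ℕ → Pacing
  | local_ : ℕ → Pacing

/-- Stream expressions. -/
inductive Expr : Type where
  | const   : Val → Expr
  | sync    : Ident → List Expr → Expr
  | hold    : Ident → List Expr → Expr
  | offset  : Ident → List Expr → ℕ → Expr
  | aggr    : Ident → List Expr → ℝ → (List (ℕ × Val) → Option Val) → Expr
  | default : Expr → Expr → Expr
  | func    : (List Val → Option Val) → List Expr → Expr
  | param   : ℕ → Expr
  | tuple   : List Expr → Expr

/-- Spawn declaration: pacing, when-clause, and componentwise with-clause. -/
structure SpawnDecl where
  pacing   : Pacing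
  when     : Expr
  withList : List Expr

/-- Eval declaration: pacing, when-clause and with-clause. -/
structure EvalDecl where
  pacing : Pacing
  when   : Expr
  withE  : Expr

/-- Close declaration: pacing and when-clause. -/
structure CloseDecl where
  pacing : Pacing
  when   : Expr

/-- An output stream. -/
structure Output where
  sid     : Ident
  nparams : ℕ
  spawn   : SpawnDecl
  evalD   : EvalDecl
  close   : CloseDecl

/-- An RTLola specification: a (finite) set of input stream identifiers and output streams. -/
structure Spec where
  inputs  : List Ident
  outputs : List Output

/-- An evaluation model: a stream map, a time map, and the derived alive-since map
(the first moment since which each stream instance is continuously alive);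
the consistency of `aliveSince` with the stream declarations is required by `AliveOK`. -/
structure World where
  streams    : Ident → Inst → ℕ → Option Val
  time       : ℕ → ℝ
  aliveSince : Ident → Inst → ℕ → Option ℕ

/-- `r mod f = 0`: the real `r` is an integer multiple of the frequency `f`. -/
def rMulOf (r : ℝ) (f : ℕ) : Prop := ∃ k : ℤ, r = k * f

/-- Evaluation of a pacing type at discrete time `t` with start time `ts`. -/
def pacingSat (w : World) (t ts : ℕ) : Pacing → Prop
  | .any      => True
  | .event ac => ac.sat (fun sid => w.streams sid [] t ≠ none)
  | .global f => rMulOf (w.time t) f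
  | .local_ f => rMulOf (w.time t - w.time ts) f

/-- `prefix'`: the sequence of defined values of the instance between `ts` and `te`,
in increasing order of timestamps. -/
def prefixBetween (σ : ℕ → Option Val) (ts te : ℕ) : List (ℕ × Val) :=
  (List.range (te + 1 - ts)).filterMap (fun i => (σ (ts + i)).map (fun v => (ts + i, v)))

/-- The prefix of a stream instance up to time `t`. -/
def streamPrefix (w : World) (sid : Ident) (inst : Inst) (t : ℕ) : List (ℕ × Val) :=
  match w.aliveSince sid inst t with
  | some ts => prefixBetween (w.streams sid inst) ts t
  | none    => []

open Classical in
/-- Helper for `window`, working on the reversed prefix. -/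
noncomputable def windowRevAux (time : ℕ → ℝ) (tstart : ℝ) : List (ℕ × Val) → List (ℕ × Val)
  | [] => []
  | tv :: rest => if tstart < time tv.1 then tv :: windowRevAux time tstart rest else []

/-- The window slice of a prefix, keeping the maximal suffix whose real-time stamps
exceed `tstart`. -/
noncomputable def window (time : ℕ → ℝ) (p : List (ℕ × Val)) (tstart : ℝ) : List (ℕ × Val) :=
  (windowRevAux time tstart p.reverse).reverse

mutual
  /-- Relational evaluation of stream expressions `⟨expr⟩ ⇓ v` at `(w, t, inst)`. -/
  inductive EvalE (w : World) (t : ℕ) (inst : Inst) : Expr → Option Val → Prop where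
    | const : ∀ v, EvalE w t inst (.const v) (some v)
    | sync : ∀ sid ps vs, EvalArgs w t inst ps vs →
        EvalE w t inst (.sync sid ps) (w.streams sid vs t)
    | hold : ∀ sid ps vs p' t' v, EvalArgs w t inst ps vs →
        streamPrefix w sid vs t = p' ++ [(t', v)] →
        EvalE w t inst (.hold sid ps) (some v)
    | holdBot : ∀ sid ps vs, EvalArgs w t inst ps vs →
        streamPrefix w sid vs t = [] →
        EvalE w t inst (.hold sid ps) none
    | offset : ∀ sid ps off vs t' v, EvalArgs w t inst ps vs →
        (streamPrefix w sid vs t).reverse[off]? = some (t', v) →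
        EvalE w t inst (.offset sid ps off) (some v)
    | offsetBot : ∀ sid ps off vs, EvalArgs w t inst ps vs →
        (streamPrefix w sid vs t).length ≤ off →
        EvalE w t inst (.offset sid ps off) none
    | aggr : ∀ sid ps dur f vs, EvalArgs w t inst ps vs →
        EvalE w t inst (.aggr sid ps dur f)
          (f (window w.time (streamPrefix w sid vs t) (w.time t - dur)))
    | defaultSome : ∀ e d v, EvalE w t inst e (some v) →
        EvalE w t inst (.default e d) (some v)
    | defaultNone : ∀ e d r, EvalE w t inst e none → EvalE w t inst d r →
        EvalE w t inst (.default e d) r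
    | func : ∀ f es vs, EvalArgs w t inst es vs → EvalE w t inst (.func f es) (f vs)
    | param : ∀ i v, inst[i]? = some v → EvalE w t inst (.param i) (some v)
    | tuple : ∀ es vs, EvalArgs w t inst es vs →
        EvalE w t inst (.tuple es) (some (.tuple vs))

  /-- Evaluation of a list of expressions to a list of (defined) values. -/
  inductive EvalArgs (w : World) (t : ℕ) (inst : Inst) : List Expr → List Val → Prop where
    | nil : EvalArgs w t inst [] []
    | cons : ∀ e es v vs, EvalE w t inst e (some v) → EvalArgs w t inst es vs →
        EvalArgs w t inst (e :: es) (v :: vs)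
end

/-- Instance-evaluation inference rules (eval-instance-*). -/
inductive EvalInst (w : World) (o : Output) (inst : Inst) (t : ℕ) : Option Val → Prop where
  | value : ∀ ts v, w.aliveSince o.sid inst t = some ts →
      pacingSat w t ts o.evalD.pacing →
      EvalE w t inst o.evalD.when (some (.bool true)) →
      EvalE w t inst o.evalD.withE (some v) →
      EvalInst w o inst t (some v)
  | falseWhen : ∀ ts, w.aliveSince o.sid inst t = some ts →
      pacingSat w t ts o.evalD.pacing →
      EvalE w t inst o.evalD.when (some (.bool false)) →
      EvalInst w o inst t none
  | falsePacing : ∀ ts, w.aliveSince o.sid inst t = some ts →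
      ¬ pacingSat w t ts o.evalD.pacing →
      EvalInst w o inst t none
  | notAlive : w.aliveSince o.sid inst t = none → EvalInst w o inst t none

/-- `isSpawned`: instance `inst` of `o` is spawned at time `t`. -/
def isSpawned (w : World) (o : Output) (inst : Inst) (t : ℕ) : Prop :=
  pacingSat w t 0 o.spawn.pacing ∧
  EvalE w t inst o.spawn.when (some (.bool true)) ∧
  EvalArgs w t inst o.spawn.withList inst

/-- `isClosed`: instance `inst` of `o` is closed at time `t` (for start time `ts`). -/
def isClosed (w : World) (o : Output) (inst : Inst) (t ts : ℕ) : Prop :=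
  pacingSat w t ts o.close.pacing → EvalE w t inst o.close.when (some (.bool true))

/-- The set of timestamps at which the instance is spawned and not closed until `tend`. -/
def spawnOpenSet (w : World) (o : Output) (inst : Inst) (tend : ℕ) : Set ℕ :=
  {ts | isSpawned w o inst ts ∧ ∀ t', ts ≤ t' → t' < tend → ¬ isClosed w o inst t' ts}

/-- Consistency of the alive-since map with the `AliveSince` definition:
`0` for inputs, and for outputs the minimal spawned-and-not-closed timestamp (or `⊥`). -/
def AliveOK (φ : Spec) (w : World) : Prop :=
  (∀ s ∈ φ.inputs, ∀ inst t, w.aliveSince s inst t = some 0) ∧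
  (∀ o ∈ φ.outputs, ∀ inst tend ts,
    w.aliveSince o.sid inst tend = some ts ↔ IsLeast (spawnOpenSet w o inst tend) ts)

/-- `w ∈ ⟦φ⟧`: the time map is strictly monotone and every output instance value
is derivable by the instance-evaluation rules. -/
def Valid (φ : Spec) (w : World) : Prop :=
  AliveOK φ w ∧ (∀ t : ℕ, w.time t < w.time (t + 1)) ∧
  (∀ o ∈ φ.outputs, ∀ inst : Inst, inst.length = o.nparams →
    ∀ t : ℕ, EvalInst w o inst t (w.streams o.sid inst t))

/-- `w(s)(ε) = i(s)` for all input streams `s`. -/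
def matchesInputs (φ : Spec) (w : World) (i : Ident → ℕ → Option Val) : Prop :=
  ∀ s ∈ φ.inputs, ∀ t, w.streams s [] t = i s t

/-- Specification safety: for every input sequence some consistent evaluation model exists. -/
def safe (φ : Spec) : Prop :=
  ∀ i : Ident → ℕ → Option Val, ∃ w : World, matchesInputs φ w i ∧ Valid φ w

/-- Stream activation of an output stream instance. -/
def activeOut (w : World) (o : Output) (t : ℕ) (inst : Inst) : Prop :=
  ∃ ts, w.aliveSince o.sid inst t = some ts ∧
    EvalE w t inst o.evalD.when (some (.bool true)) ∧
    pacingSat w t ts o.evalD.pacing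

/-- Stream activation: the instance is alive, its eval filter is true and its pacing holds
(input streams are active whenever they carry a value). -/
def active (φ : Spec) (w : World) (sid : Ident) (t : ℕ) (inst : Inst) : Prop :=
  (sid ∈ φ.inputs ∧ w.streams sid inst t ≠ none) ∨
  (∃ o ∈ φ.outputs, o.sid = sid ∧ activeOut w o t inst)

/-- Subexpression (occurrence) relation. -/
inductive SubExpr : Expr → Expr → Prop where
  | refl : ∀ e, SubExpr e e
  | syncArg : ∀ {e e'} (sid : Ident) (ps : List Expr), e' ∈ ps → SubExpr e e' →
      SubExpr e (.sync sid ps)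
  | holdArg : ∀ {e e'} (sid : Ident) (ps : List Expr), e' ∈ ps → SubExpr e e' →
      SubExpr e (.hold sid ps)
  | offsetArg : ∀ {e e'} (sid : Ident) (ps : List Expr) (off : ℕ), e' ∈ ps → SubExpr e e' →
      SubExpr e (.offset sid ps off)
  | aggrArg : ∀ {e e'} (sid : Ident) (ps : List Expr) (dur : ℝ) f, e' ∈ ps → SubExpr e e' →
      SubExpr e (.aggr sid ps dur f)
  | defaultL : ∀ {e} (e₁ e₂ : Expr), SubExpr e e₁ → SubExpr e (.default e₁ e₂)
  | defaultR : ∀ {e} (e₁ e₂ : Expr), SubExpr e e₂ → SubExpr e (.default e₁ e₂)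
  | funcArg : ∀ {e e'} (f : List Val → Option Val) (es : List Expr), e' ∈ es → SubExpr e e' →
      SubExpr e (.func f es)
  | tupleArg : ∀ {e e'} (es : List Expr), e' ∈ es → SubExpr e e' → SubExpr e (.tuple es)

/-- `e` occurs in one of the stream declarations of the output `o`. -/
def exprInOutput (e : Expr) (o : Output) : Prop :=
  SubExpr e o.spawn.when ∨ (∃ e' ∈ o.spawn.withList, SubExpr e e') ∨
  SubExpr e o.evalD.when ∨ SubExpr e o.evalD.withE ∨ SubExpr e o.close.when

theorem spawnOpenSet_mono {w : World} {a b : Output} {inst : Inst}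
    (hspawn : ∀ t, isSpawned w a inst t → isSpawned w b inst t)
    (hclose : ∀ t ts, isClosed w b inst t ts → isClosed w a inst t ts) (tend : ℕ) :
    spawnOpenSet w a inst tend ⊆ spawnOpenSet w b inst tend :=
  fun _ ⟨hspawned, hopen⟩ ↦
    ⟨hspawn _ hspawned, fun t' hle hlt hclosed ↦ hopen t' hle hlt (hclose t' _ hclosed)⟩

/-- Alive-since comparison: let `a` and `b` be output streams of `φ` such that, for every
evaluation model, every instance and every timestamp, (i) whenever an instance of `a` is
spawned, the corresponding instance of `b` is spawned, and (ii) whenever an instance of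
`b` is closed (for any start time), the corresponding instance of `a` is closed. Then in
every evaluation model whose alive-since map is consistent (`AliveOK`): if
`alive(w, a.sid, inst, t) = t_a ≠ ⊥`, then `alive(w, b.sid, inst, t) = t_b` with
`t_b ≠ ⊥` and `t_b ≤ t_a`. -/
theorem alive_since_comparison (φ : Spec) (a b : Output)
    (ha : a ∈ φ.outputs) (hb : b ∈ φ.outputs)
    (hspawn : ∀ (w : World) (inst : Inst) (t : ℕ),
      isSpawned w a inst t → isSpawned w b inst t)
    (hclose : ∀ (w : World) (inst : Inst) (t ts : ℕ),
      isClosed w b inst t ts → isClosed w a inst t ts) :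
    ∀ (w : World), AliveOK φ w →
      ∀ (inst : Inst) (t ta : ℕ), w.aliveSince a.sid inst t = some ta →
        ∃ tb : ℕ, w.aliveSince b.sid inst t = some tb ∧ tb ≤ ta := by
  intro w hok inst t ta hta
  have hleast_a : IsLeast (spawnOpenSet w a inst t) ta := (hok.2 a ha inst t ta).mp hta
  have hsub := spawnOpenSet_mono (hspawn w inst) (hclose w inst) t
  have hleast_b := isLeast_csInf ⟨ta, hsub hleast_a.1⟩
  exact ⟨_, (hok.2 b hb inst t _).mpr hleast_b, hleast_a.mono hleast_b hsub⟩

end RTLola
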